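/- If A and B are n×n positive semidefinite Hermitian matrices with eigenvalues a_1 ≥ ... ≥ a_n ≥ 0 and b_1 ≥ ... ≥ b_n ≥ 0 respectively, then ∑_{i=1}^n a_i b_{n-i+1} ≤ trace(A B) ≤ ∑_{i=1}^n a_i b_i. -/

import Mathlib

/-!
Write `A = U diag(α) U*` and `B = V diag(β) V*`. With `W = U* V`, `tr(AB) = ∑ᵢⱼ αᵢ βⱼ |Wᵢⱼ|²`,
and since `W` is unitary, `S = (|Wᵢⱼ|²)` is doubly stochastic. The linear function
`S ↦ α ⬝ (S β)` attains its extrema on the doubly stochastic matrices at permutation matrices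
(Birkhoff), where its values `∑ᵢ αᵢ β_{π i}` are bounded by the rearrangement inequality.
-/

open Finset Matrix

section

variable {n : Type*} [Fintype n] [DecidableEq n]

theorem Matrix.map_norm_sq_mem_doublyStochastic {𝕜 : Type*} [RCLike 𝕜] {U : Matrix n n 𝕜}
    (hU : U ∈ unitaryGroup n 𝕜) : U.map (‖·‖ ^ 2) ∈ doublyStochastic ℝ n := by
  refine mem_doublyStochastic_iff_sum.2 ⟨fun i j => sq_nonneg _, fun i => ?_, fun j => ?_⟩
  · have := congr_fun₂ (mem_unitaryGroup_iff.1 hU) i i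
    simp only [mul_apply, star_apply, RCLike.star_def, RCLike.mul_conj, one_apply_eq] at this
    exact_mod_cast this
  · have := congr_fun₂ (mem_unitaryGroup_iff'.1 hU) j j
    simp only [mul_apply, star_apply, RCLike.star_def, RCLike.conj_mul, one_apply_eq] at this
    exact_mod_cast this

theorem Matrix.trace_diagonal_mul_diagonal_mul_star {𝕜 : Type*} [RCLike 𝕜] (W : Matrix n n 𝕜)
    (a b : n → ℝ) :
    (diagonal (RCLike.ofReal ∘ a) * W * diagonal (RCLike.ofReal ∘ b) * star W).trace =
      ((a ⬝ᵥ (W.map (‖·‖ ^ 2) *ᵥ b) : ℝ) : 𝕜) := by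
  simp only [trace, diag, mul_apply, diagonal_apply, ite_mul, zero_mul, mul_ite, mul_zero,
    sum_ite_eq, sum_ite_eq', mem_univ, if_true, star_apply, RCLike.star_def, dotProduct, mulVec,
    map_apply, Function.comp_apply]
  push_cast
  simp only [mul_sum]
  refine sum_congr rfl fun i _ => sum_congr rfl fun j _ => ?_
  rw [← RCLike.mul_conj]
  ring

theorem Matrix.IsHermitian.trace_mul_eq_dotProduct {𝕜 : Type*} [RCLike 𝕜] {A B : Matrix n n 𝕜}
    (hA : A.IsHermitian) (hB : B.IsHermitian) :
    (A * B).trace = ((hA.eigenvalues ⬝ᵥ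
      ((star (hA.eigenvectorUnitary : Matrix n n 𝕜) * hB.eigenvectorUnitary).map (‖·‖ ^ 2) *ᵥ
        hB.eigenvalues) : ℝ) : 𝕜) := by
  rw [← trace_diagonal_mul_diagonal_mul_star]
  conv_lhs => rw [hA.spectral_theorem, hB.spectral_theorem]
  simp only [Unitary.conjStarAlgAut_apply, star_mul, star_star, Matrix.mul_assoc]
  rw [trace_mul_comm]
  simp only [Matrix.mul_assoc]

theorem exists_perm_dotProduct_mulVec_le_of_mem_doublyStochastic {M : Matrix n n ℝ}
    (hM : M ∈ doublyStochastic ℝ n) (f g : n → ℝ) :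
    ∃ σ : Equiv.Perm n, f ⬝ᵥ (M *ᵥ g) ≤ f ⬝ᵥ (g ∘ σ) := by
  let φ : Matrix n n ℝ →ₗ[ℝ] ℝ :=
    { toFun := fun M => f ⬝ᵥ (M *ᵥ g)
      map_add' := fun M N => by simp only [add_mulVec, dotProduct_add]
      map_smul' := fun c M => by simp only [smul_mulVec, dotProduct_smul, RingHom.id_apply] }
  rw [← SetLike.mem_coe, doublyStochastic_eq_convexHull_permMatrix] at hM
  obtain ⟨_, ⟨σ, rfl⟩, hσ⟩ :=
    (φ.convexOn convex_univ).exists_ge_of_mem_convexHull (Set.subset_univ _) hM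
  exact ⟨σ, by simpa [φ, permMatrix_mulVec] using hσ⟩

theorem Monovary.dotProduct_mulVec_le_of_mem_doublyStochastic {M : Matrix n n ℝ}
    (hM : M ∈ doublyStochastic ℝ n) {f g : n → ℝ} {σ τ : Equiv.Perm n}
    (hfg : Monovary (f ∘ σ) (g ∘ τ)) : f ⬝ᵥ (M *ᵥ g) ≤ (f ∘ σ) ⬝ᵥ (g ∘ τ) := by
  obtain ⟨π, hπ⟩ := exists_perm_dotProduct_mulVec_le_of_mem_doublyStochastic hM f g
  calc f ⬝ᵥ (M *ᵥ g) ≤ f ⬝ᵥ (g ∘ π) := hπ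
    _ = ∑ i, (f ∘ σ) i * (g ∘ τ) ((σ.trans (π.trans τ.symm)) i) := by
      rw [dotProduct, ← Equiv.sum_comp σ]; simp
    _ ≤ (f ∘ σ) ⬝ᵥ (g ∘ τ) := hfg.sum_mul_comp_perm_le_sum_mul

theorem Antivary.le_dotProduct_mulVec_of_mem_doublyStochastic {M : Matrix n n ℝ}
    (hM : M ∈ doublyStochastic ℝ n) {f g : n → ℝ} {σ τ : Equiv.Perm n}
    (hfg : Antivary (f ∘ σ) (g ∘ τ)) : (f ∘ σ) ⬝ᵥ (g ∘ τ) ≤ f ⬝ᵥ (M *ᵥ g) := by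
  have := Monovary.dotProduct_mulVec_le_of_mem_doublyStochastic (g := -g) hM hfg.neg_right
  rwa [mulVec_neg, dotProduct_neg, Pi.neg_comp, dotProduct_neg, neg_le_neg_iff] at this

end

theorem ruhe_trace_inequality_general {n : ℕ} (A B : Matrix (Fin n) (Fin n) ℝ)
    (hA : A.PosSemidef) (hB : B.PosSemidef)
    (a b : Fin n → ℝ) (ha : Antitone a) (hb : Antitone b)
    (hpa : ∃ σ : Equiv.Perm (Fin n), a = hA.1.eigenvalues ∘ σ)
    (hpb : ∃ σ : Equiv.Perm (Fin n), b = hB.1.eigenvalues ∘ σ) :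
    (∑ i, a i * b i.rev) ≤ (A * B).trace ∧ (A * B).trace ≤ ∑ i, a i * b i := by
  obtain ⟨σ, rfl⟩ := hpa
  obtain ⟨τ, rfl⟩ := hpb
  have hS := map_norm_sq_mem_doublyStochastic
    (star hA.1.eigenvectorUnitary * hB.1.eigenvectorUnitary).2
  rw [hA.1.trace_mul_eq_dotProduct hB.1, RCLike.ofReal_real_eq_id, id]
  have hrev : Antivary (hA.1.eigenvalues ∘ σ) (hB.1.eigenvalues ∘ (Fin.revPerm.trans τ)) :=
    ha.antivary (hb.comp Fin.rev_anti)
  exact ⟨hrev.le_dotProduct_mulVec_of_mem_doublyStochastic hS,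
    (ha.monovary hb).dotProduct_mulVec_le_of_mem_doublyStochastic hS⟩

/-- Ruhe's trace inequality for positive semidefinite Hermitian matrices. -/
theorem ruhe_trace_inequality {n : ℕ} (A B : Matrix (Fin n) (Fin n) ℝ)
    (hA : A.PosSemidef) (hB : B.PosSemidef)
    (a b : Fin n → ℝ) (ha : Antitone a) (hb : Antitone b)
    (ha0 : ∀ i, 0 ≤ a i) (hb0 : ∀ i, 0 ≤ b i)
    (hpa : ∃ σ : Equiv.Perm (Fin n), a = hA.1.eigenvalues ∘ σ)
    (hpb : ∃ σ : Equiv.Perm (Fin n), b = hB.1.eigenvalues ∘ σ) :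
    (∑ i, a i * b i.rev) ≤ (A * B).trace ∧ (A * B).trace ≤ ∑ i, a i * b i :=
  ruhe_trace_inequality_general A B hA hB a b ha hb hpa hpb
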